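/- Define the expected one-step rewards under the ε-greedy always-defect policy: R_D = (1−ε)·r_DD + ε·r_DC and R_C = (1−ε)·r_CD + ε·r_CC. Then the Q-table Q given by Q(s,D) = R_D/(1−γ) and Q(s,C) = R_C + γ·R_D/(1−γ) for every state s ∈ S satisfies, for all s ∈ S and a1 ∈ A, Q(s,a1) = (1−ε)·(r_{a1 D} + γ·max_a Q((a1,D),a)) + ε·(r_{a1 C} + γ·max_a Q((a1,C),a)); moreover Q(s,D) > Q(s,C) for every state s, so Q is an ε-greedy fixed point of the self-play multi-agent Bellman equation whose greedy policy is always-defect. -/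

import Mathlib

inductive Act | C | D
deriving DecidableEq

open Act

abbrev State := Act × Act

/-! Defection strictly dominates cooperation against either opponent action, so its ε-averaged
reward `RD` exceeds `RC`. Since `RD / (1 - γ) = RD + γ * RD / (1 - γ)`, the two Q-values differ by
exactly `RD - RC > 0`: the greedy action is `D` in every state, every continuation value is
`RD / (1 - γ)`, and the Bellman equation reduces to that identity. -/

theorem one_sub_mul_add_mul_lt {R : Type*} [Ring R] [PartialOrder R] [IsStrictOrderedRing R]
    {ε x x' y y' : R} (hε0 : 0 ≤ ε) (hε1 : ε ≤ 1)
    (hx : x < x') (hy : y < y') : (1 - ε) * x + ε * y < (1 - ε) * x' + ε * y' := by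
  rcases hε1.lt_or_eq with hε1 | rfl
  · exact add_lt_add_of_lt_of_le (mul_lt_mul_of_pos_left hx (sub_pos.2 hε1))
      (mul_le_mul_of_nonneg_left hy.le hε0)
  · simpa using hy

theorem div_one_sub_eq_add_mul_div {K : Type*} [Field K] {γ : K} (hγ : γ ≠ 1) (R : K) :
    R / (1 - γ) = R + γ * R / (1 - γ) := by
  have : 1 - γ ≠ 0 := sub_ne_zero.2 hγ.symm
  field_simp
  ring

theorem always_defect_fixed_point_general
    (rCC rCD rDC rDD : ℝ)
    (h1 : rDC > rCC) (h3 : rDD > rCD)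
    (r : Act → Act → ℝ)
    (hrCC : r C C = rCC) (hrCD : r C D = rCD)
    (hrDC : r D C = rDC) (hrDD : r D D = rDD)
    (γ ε : ℝ) (hγ1 : γ < 1) (hε0 : 0 ≤ ε) (hε1 : ε < 1 / 2)
    (RD RC : ℝ)
    (hRD : RD = (1 - ε) * rDD + ε * rDC)
    (hRC : RC = (1 - ε) * rCD + ε * rCC)
    (Q : State → Act → ℝ)
    (hQD : ∀ s : State, Q s D = RD / (1 - γ))
    (hQC : ∀ s : State, Q s C = RC + γ * RD / (1 - γ)) :
    (∀ (s : State) (a1 : Act),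
        Q s a1 = (1 - ε) * (r a1 D + γ * max (Q (a1, D) C) (Q (a1, D) D))
          + ε * (r a1 C + γ * max (Q (a1, C) C) (Q (a1, C) D)))
    ∧ ∀ s : State, Q s D > Q s C := by
  have hvalue := div_one_sub_eq_add_mul_div hγ1.ne RD
  have hRC_lt_RD : RC < RD := by
    rw [hRC, hRD]
    exact one_sub_mul_add_mul_lt hε0 (by linarith) h3 h1
  have hgreedy : ∀ s : State, Q s D > Q s C := fun s => by
    rw [hQD, hQC, hvalue]
    linarith
  have hcontinuation : ∀ s : State, max (Q s C) (Q s D) = RD / (1 - γ) := fun s => by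
    rw [max_eq_right (hgreedy s).le, hQD]
  refine ⟨fun s a1 => ?_, hgreedy⟩
  rw [hcontinuation, hcontinuation]
  cases a1
  · rw [hQC, hrCD, hrCC, hRC]
    ring
  · rw [hQD, hrDD, hrDC]
    linear_combination hvalue + hRD

/-- the ε-greedy always-defect fixed point of the self-play
multi-agent Bellman equation. -/
theorem always_defect_fixed_point
    (rCC rCD rDC rDD : ℝ)
    (h1 : rDC > rCC) (h2 : rCC > rDD) (h3 : rDD > rCD)
    (h4 : 2 * rCC > rCD + rDC)
    (r : Act → Act → ℝ)
    (hrCC : r C C = rCC) (hrCD : r C D = rCD)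
    (hrDC : r D C = rDC) (hrDD : r D D = rDD)
    (γ ε : ℝ) (hγ0 : 0 < γ) (hγ1 : γ < 1) (hε0 : 0 ≤ ε) (hε1 : ε < 1 / 2)
    (RD RC : ℝ)
    (hRD : RD = (1 - ε) * rDD + ε * rDC)
    (hRC : RC = (1 - ε) * rCD + ε * rCC)
    (Q : State → Act → ℝ)
    (hQD : ∀ s : State, Q s D = RD / (1 - γ))
    (hQC : ∀ s : State, Q s C = RC + γ * RD / (1 - γ)) :
    (∀ (s : State) (a1 : Act),
        Q s a1 = (1 - ε) * (r a1 D + γ * max (Q (a1, D) C) (Q (a1, D) D))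
          + ε * (r a1 C + γ * max (Q (a1, C) C) (Q (a1, C) D)))
    ∧ ∀ s : State, Q s D > Q s C :=
  always_defect_fixed_point_general rCC rCD rDC rDD h1 h3 r hrCC hrCD hrDC hrDD γ ε hγ1 hε0 hε1 RD
    RC hRD hRC Q hQD hQC
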